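/- arXiv:1104.0406 — 7 statements merged into one kernel-verified Lean document; each statement's English description precedes it below -/
import Mathlib

section
/- Let n ≥ 2 and let A = (a_{ij}) be a real n × n matrix. Define σ₁(A) = Σ_{i=1}^n a_{ii}, σ₁(A|1) = Σ_{i=2}^n a_{ii}, and σ₂(A) = Σ_{1 ≤ i < j ≤ n} (a_{ii} a_{jj} − a_{ij} a_{ji}). Then σ₁(A)·σ₁(A|1) = σ₂(A) + (n/(2(n−1)))·[σ₁(A|1)]² + Σ_{1 ≤ i < j ≤ n} a_{ij} a_{ji} + (1/(2(n−1)))·Σ_{2 ≤ i < j ≤ n} (a_{ii} − a_{jj})². -/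
open Finset

/-!
Put `d i = a_{ii}` for `i ≥ 2`, `s = ∑ d i` and `q = ∑ d i ^ 2`. Adding the cross terms
`∑_{i<j} a_{ij} a_{ji}` to `σ₂(A)` leaves `∑_{i<j} a_{ii} a_{jj} = a_{11} s + (s² - q) / 2`, while
`∑_{2≤i<j} (d i - d j)² = (n - 1) q - s²`. Substituting, both sides equal `a_{11} s + s²`.
-/

section OrderedPairs

variable {ι : Type*} [Fintype ι] [LinearOrder ι]

theorem sum_sum_ite_lt_add_swap {M : Type*} [AddCommGroup M] (f : ι → ι → M) :
    ∑ i, ∑ j, (if i < j then f i j + f j i else 0) = ∑ i, ∑ j, f i j - ∑ i, f i i := by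
  have hswap : ∑ i, ∑ j, (if i < j then f j i else 0) = ∑ i, ∑ j, (if j < i then f i j else 0) :=
    Finset.sum_comm
  have hsplit : ∀ i j, (if i < j then f i j else 0) + (if j < i then f i j else 0)
      = f i j - if i = j then f i j else 0 := by
    intro i j
    rcases lt_trichotomy i j with h | rfl | h
    · simp [h, h.not_gt, h.ne]
    · simp
    · simp [h, h.not_gt, h.ne']
  simp only [ite_add_zero, sum_add_distrib]
  rw [hswap, ← sum_add_distrib]
  simp only [← sum_add_distrib, hsplit, sum_sub_distrib, sum_ite_eq, mem_univ, if_true]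

variable {R : Type*} [CommRing R] (d : ι → R)

theorem two_mul_sum_sum_ite_lt_mul :
    2 * ∑ i, ∑ j, (if i < j then d i * d j else 0) = (∑ i, d i) ^ 2 - ∑ i, d i ^ 2 := by
  have h := sum_sum_ite_lt_add_swap fun i j => d i * d j
  simp only [mul_comm (d _) (d _), ← two_mul, ← sum_mul_sum, ← pow_two] at h
  simp only [mul_sum, mul_ite, mul_zero]
  exact h

theorem sum_sum_ite_lt_add_sq :
    ∑ i, ∑ j, (if i < j then d i ^ 2 + d j ^ 2 else 0) =
      (Fintype.card ι - 1) * ∑ i, d i ^ 2 := by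
  rw [sum_sum_ite_lt_add_swap fun i j => d i ^ 2]
  simp [sum_const, sub_mul, mul_sum]

theorem sum_sum_ite_lt_sub_sq :
    ∑ i, ∑ j, (if i < j then (d i - d j) ^ 2 else 0) =
      Fintype.card ι * ∑ i, d i ^ 2 - (∑ i, d i) ^ 2 := by
  have hexpand : ∀ i j, (if i < j then (d i - d j) ^ 2 else 0) =
      (if i < j then d i ^ 2 + d j ^ 2 else 0) - 2 * (if i < j then d i * d j else 0) := by
    intro i j
    split_ifs <;> ring
  simp only [hexpand, sum_sub_distrib, ← mul_sum, sum_sum_ite_lt_add_sq,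
    two_mul_sum_sum_ite_lt_mul]
  ring

end OrderedPairs

namespace Fin

variable {M : Type*} [AddCommMonoid M] {m : ℕ}

theorem sum_ite_ne_zero (f : Fin (m + 1) → M) :
    ∑ i, (if i ≠ 0 then f i else 0) = ∑ i : Fin m, f i.succ := by
  simp [Fin.sum_univ_succ, Fin.succ_ne_zero]

theorem sum_sum_ite_lt_succ (f : Fin (m + 1) → Fin (m + 1) → M) :
    ∑ i, ∑ j, (if i < j then f i j else 0) =
      ∑ j : Fin m, f 0 j.succ + ∑ i : Fin m, ∑ j : Fin m, if i < j then f i.succ j.succ else 0 := by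
  simp [Fin.sum_univ_succ, Fin.succ_pos, Fin.succ_lt_succ_iff]

theorem sum_sum_ite_lt_and_ne_zero (f : Fin (m + 1) → Fin (m + 1) → M) :
    ∑ i, ∑ j, (if i < j ∧ i ≠ 0 then f i j else 0) =
      ∑ i : Fin m, ∑ j : Fin m, if i < j then f i.succ j.succ else 0 := by
  simp [Fin.sum_univ_succ, Fin.succ_lt_succ_iff, Fin.succ_ne_zero]

end Fin

/-- Proposition 2.4 (identity): for a real n×n matrix (n ≥ 2, encoded as size n+2),
σ₁(A)·σ₁(A|1) = σ₂(A) + (n/(2(n−1)))·σ₁(A|1)² + Σ_{i<j} a_{ij}a_{ji}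
  + (1/(2(n−1)))·Σ_{2≤i<j} (a_{ii}−a_{jj})². -/
theorem stmt_0 (n : ℕ) (A : Matrix (Fin (n + 2)) (Fin (n + 2)) ℝ) :
    (∑ i, A i i) * (∑ i, if i ≠ 0 then A i i else 0) =
      (∑ i, ∑ j, if i < j then A i i * A j j - A i j * A j i else 0)
        + ((n + 2 : ℝ) / (2 * (n + 1))) * (∑ i, if i ≠ 0 then A i i else 0) ^ 2
        + (∑ i, ∑ j, if i < j then A i j * A j i else 0)
        + (1 / (2 * (n + 1 : ℝ))) *
            ∑ i, ∑ j, if i < j ∧ i ≠ 0 then (A i i - A j j) ^ 2 else 0 := by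
  set d : Fin (n + 1) → ℝ := fun i => A i.succ i.succ
  have htrace : ∑ i, A i i = A 0 0 + ∑ i, d i := Fin.sum_univ_succ _
  have htail : (∑ i, if i ≠ 0 then A i i else 0) = ∑ i, d i :=
    Fin.sum_ite_ne_zero fun i => A i i
  have hσ₂_add_cross : (∑ i, ∑ j, if i < j then A i i * A j j - A i j * A j i else 0) +
      (∑ i, ∑ j, if i < j then A i j * A j i else 0) =
        A 0 0 * ∑ i, d i + ∑ i, ∑ j, if i < j then d i * d j else 0 := by
    have hcancel : ∀ i j : Fin (n + 2), ((if i < j then A i i * A j j - A i j * A j i else 0) +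
        if i < j then A i j * A j i else 0) = if i < j then A i i * A j j else 0 := by
      intro i j
      split_ifs <;> ring
    simp only [← sum_add_distrib, hcancel, Fin.sum_sum_ite_lt_succ fun i j => A i i * A j j,
      mul_sum]
    rfl
  have hspread : (∑ i, ∑ j, if i < j ∧ i ≠ 0 then (A i i - A j j) ^ 2 else 0) =
      (n + 1) * ∑ i, d i ^ 2 - (∑ i, d i) ^ 2 := by
    rw [Fin.sum_sum_ite_lt_and_ne_zero fun i j => (A i i - A j j) ^ 2, sum_sum_ite_lt_sub_sq]
    simp [d]
  have hpairs := two_mul_sum_sum_ite_lt_mul d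
  have hweights : ((n + 2 : ℝ) / (2 * (n + 1))) * (∑ i, d i) ^ 2 +
      (1 / (2 * (n + 1 : ℝ))) * ((n + 1) * ∑ i, d i ^ 2 - (∑ i, d i) ^ 2) =
        ((∑ i, d i) ^ 2 + ∑ i, d i ^ 2) / 2 := by
    field_simp
    ring
  rw [htrace, htail, hspread]
  linear_combination -hpairs / 2 - hσ₂_add_cross - hweights
end

section
/- Let n ≥ 2 and let A = (a_{ij}) be a real n × n matrix such that a_{ij} a_{ji} ≥ 0 for all 1 ≤ i < j ≤ n. Then σ₁(A)·σ₁(A|1) ≥ σ₂(A) + (n/(2(n−1)))·[σ₁(A|1)]², where σ₁(A) = Σ_{i=1}^n a_{ii}, σ₁(A|1) = Σ_{i=2}^n a_{ii}, and σ₂(A) = Σ_{i<j} (a_{ii}a_{jj} − a_{ij}a_{ji}). -/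
open Finset

/-!
Write `dᵢ = aᵢᵢ`, `t = σ₁(A|1)` and `P = ∑_{i<j} dᵢ dⱼ`. The hypothesis makes every product
`aᵢⱼ aⱼᵢ` nonnegative, so `σ₂(A) ≤ P`, and it suffices to treat the diagonal part. Expanding the
square of the trace gives `2P = (d₀ + t)² - d₀² - ∑_{i≥1} dᵢ²`, whence
`σ₁(A) t - P = (t² + ∑_{i≥1} dᵢ²) / 2`, and Cauchy–Schwarz `t² ≤ (n-1) ∑_{i≥1} dᵢ²` finishes.
-/

section PairSums

variable {ι : Type*} [Fintype ι] [LinearOrder ι]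

theorem sum_sum_eq_sum_diag_add_two_mul_sum_lt {R : Type*} [CommSemiring R] (g : ι → ι → R)
    (hg : ∀ i j, g i j = g j i) :
    ∑ i, ∑ j, g i j = ∑ i, g i i + 2 * ∑ i, ∑ j, if i < j then g i j else 0 := by
  have hsplit : ∀ i j, g i j = (if i < j then g i j else 0) + (if i = j then g i j else 0)
      + (if j < i then g j i else 0) := by
    intro i j
    rcases lt_trichotomy i j with h | rfl | h
    · simp [h, h.ne, h.not_gt]
    · simp
    · simp [h, h.ne', h.not_gt, hg i j]
  have hgt : ∑ i, ∑ j, (if j < i then g j i else 0) = ∑ i, ∑ j, if i < j then g i j else 0 :=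
    sum_comm
  have hdiag : ∑ i, ∑ j, (if i = j then g i j else 0) = ∑ i, g i i := by
    simp only [sum_ite_eq, mem_univ, if_true]
  calc ∑ i, ∑ j, g i j
      = ∑ i, ∑ j, ((if i < j then g i j else 0) + (if i = j then g i j else 0)
          + (if j < i then g j i else 0)) := by simp only [← hsplit]
    _ = ∑ i, g i i + 2 * ∑ i, ∑ j, if i < j then g i j else 0 := by
      simp only [sum_add_distrib, hdiag, hgt]
      ring

theorem two_mul_sum_lt_mul_eq {R : Type*} [CommRing R] (f : ι → R) :
    2 * ∑ i, ∑ j, (if i < j then f i * f j else 0) = (∑ i, f i) ^ 2 - ∑ i, f i ^ 2 := by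
  rw [sq, sum_mul_sum, sum_sum_eq_sum_diag_add_two_mul_sum_lt _ fun i j ↦ mul_comm _ _]
  simp only [sq, add_sub_cancel_left]

theorem sum_lt_sub_mul_le_sum_lt {R : Type*} [Ring R] [PartialOrder R] [IsOrderedAddMonoid R]
    (A : Matrix ι ι R) (hA : ∀ i j, i < j → 0 ≤ A i j * A j i) :
    ∑ i, ∑ j, (if i < j then A i i * A j j - A i j * A j i else 0) ≤
      ∑ i, ∑ j, if i < j then A i i * A j j else 0 := by
  gcongr with i _ j _
  split_ifs with h
  exacts [sub_le_self _ (hA i j h), le_rfl]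

end PairSums

theorem sum_mul_sum_ne_zero_ge_sum_lt_mul_add (n : ℕ) (d : Fin (n + 2) → ℝ) :
    (∑ i, d i) * (∑ i, if i ≠ 0 then d i else 0) ≥
      (∑ i, ∑ j, if i < j then d i * d j else 0)
        + ((n + 2 : ℝ) / (2 * (n + 1))) * (∑ i, if i ≠ 0 then d i else 0) ^ 2 := by
  set t := ∑ i, if i ≠ 0 then d i else 0
  set Q := ∑ i : Fin (n + 1), d i.succ ^ 2
  have ht : t = ∑ i : Fin (n + 1), d i.succ := by
    simp [t, Fin.sum_univ_succ, Fin.succ_ne_zero]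
  have hsum : ∑ i, d i = d 0 + t := by rw [ht, Fin.sum_univ_succ]
  have hsum_sq : ∑ i, d i ^ 2 = d 0 ^ 2 + Q := Fin.sum_univ_succ _
  have hpairs := two_mul_sum_lt_mul_eq d
  have hcs : t ^ 2 ≤ (n + 1) * Q := by
    simpa [ht, Q] using sq_sum_le_card_mul_sum_sq (s := univ) (f := fun i : Fin (n + 1) ↦ d i.succ)
  have hcoef : ((n + 2 : ℝ) / (2 * (n + 1))) * t ^ 2 ≤ (t ^ 2 + Q) / 2 := by
    rw [div_mul_eq_mul_div, div_le_div_iff₀ (by positivity) two_pos]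
    linarith
  rw [hsum, hsum_sq] at hpairs
  rw [hsum]
  linarith

/-- Proposition 2.4 (inequality): if a_{ij}a_{ji} ≥ 0 for all i < j, then
σ₁(A)·σ₁(A|1) ≥ σ₂(A) + (n/(2(n−1)))·σ₁(A|1)².  (n ≥ 2 encoded as size n+2.) -/
theorem stmt_1 (n : ℕ) (A : Matrix (Fin (n + 2)) (Fin (n + 2)) ℝ)
    (hA : ∀ i j : Fin (n + 2), i < j → 0 ≤ A i j * A j i) :
    (∑ i, A i i) * (∑ i, if i ≠ 0 then A i i else 0) ≥
      (∑ i, ∑ j, if i < j then A i i * A j j - A i j * A j i else 0)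
        + ((n + 2 : ℝ) / (2 * (n + 1))) * (∑ i, if i ≠ 0 then A i i else 0) ^ 2 :=
  (sum_mul_sum_ne_zero_ge_sum_lt_mul_add n fun i ↦ A i i).trans' <|
    add_le_add_left (sum_lt_sub_mul_le_sum_lt A hA) _
end

section
/- Let n ≥ 2 and let A = (a_{ij}) be a real n × n matrix with a_{ij} a_{ji} ≥ 0 for all 1 ≤ i < j ≤ n. Then the equality σ₁(A)·σ₁(A|1) = σ₂(A) + (n/(2(n−1)))·[σ₁(A|1)]² holds if and only if a_{22} = a_{33} = ⋯ = a_{nn} and a_{ij} a_{ji} = 0 for all 1 ≤ i < j ≤ n. -/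
open Finset

private lemma split_sum {ι : Type*} [LinearOrder ι] (s : Finset ι) (g : ι → ι → ℝ) :
    ∑ i ∈ s, ∑ j ∈ s, g i j =
      (∑ i ∈ s, ∑ j ∈ s, if i < j then g i j else 0) +
      (∑ i ∈ s, ∑ j ∈ s, if i < j then g j i else 0) +
      ∑ i ∈ s, g i i := by
  classical
  have h1 : ∑ i ∈ s, ∑ j ∈ s, g i j =
      (∑ i ∈ s, ∑ j ∈ s, if i < j then g i j else 0) +
      (∑ i ∈ s, ∑ j ∈ s, if j < i then g i j else 0) +
      (∑ i ∈ s, ∑ j ∈ s, if i = j then g i j else 0) := by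
    rw [← sum_add_distrib, ← sum_add_distrib]
    refine sum_congr rfl fun i _ => ?_
    rw [← sum_add_distrib, ← sum_add_distrib]
    refine sum_congr rfl fun j _ => ?_
    rcases lt_trichotomy i j with h | h | h
    · simp [h, h.ne, not_lt.2 h.le]
    · simp [h]
    · simp [h, h.ne', not_lt.2 h.le]
  rw [h1]
  congr 1
  · congr 1
    rw [sum_comm]
  · refine sum_congr rfl fun i hi => ?_
    rw [sum_ite_eq]
    simp [hi]

/-- Proposition 2.4 (equality case): under a_{ij}a_{ji} ≥ 0 for i < j, equality
σ₁(A)·σ₁(A|1) = σ₂(A) + (n/(2(n−1)))·σ₁(A|1)² holds iff a_{22} = ⋯ = a_{nn} and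
a_{ij}a_{ji} = 0 for all i < j.  (n ≥ 2 encoded as size n+2.) -/
theorem stmt_2 (n : ℕ) (A : Matrix (Fin (n + 2)) (Fin (n + 2)) ℝ)
    (hA : ∀ i j : Fin (n + 2), i < j → 0 ≤ A i j * A j i) :
    (∑ i, A i i) * (∑ i, if i ≠ 0 then A i i else 0) =
      (∑ i, ∑ j, if i < j then A i i * A j j - A i j * A j i else 0)
        + ((n + 2 : ℝ) / (2 * (n + 1))) * (∑ i, if i ≠ 0 then A i i else 0) ^ 2 ↔
      (∀ i j : Fin (n + 2), i ≠ 0 → j ≠ 0 → A i i = A j j) ∧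
        (∀ i j : Fin (n + 2), i < j → A i j * A j i = 0) := by
  classical
  set f : Fin (n + 2) → ℝ := fun i => A i i with hf
  set e : Finset (Fin (n + 2)) := Finset.univ.erase 0 with he
  have hcard : (e.card : ℝ) = (n : ℝ) + 1 := by
    rw [he, card_erase_of_mem (mem_univ 0)]
    simp
  have hfilter : (∑ i, if i ≠ 0 then A i i else 0) = ∑ i ∈ e, f i := by
    rw [he, ← sum_filter, filter_ne']
  set S : ℝ := ∑ i ∈ e, f i with hS
  set Q : ℝ := ∑ i ∈ e, f i ^ 2 with hQ
  set P : ℝ := ∑ i, ∑ j, if i < j then A i j * A j i else 0 with hP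
  set D : ℝ := ∑ i ∈ e, ∑ j ∈ e, if i < j then (f i - f j) ^ 2 else 0 with hD
  have hT : (∑ i, f i) = f 0 + S := by
    rw [hS, he, add_sum_erase _ f (mem_univ 0)]
  have hQfull : (∑ i, f i ^ 2) = f 0 ^ 2 + Q := by
    rw [hQ, he, add_sum_erase _ (fun i => f i ^ 2) (mem_univ 0)]
  -- σ₂ splits
  have hsig : (∑ i, ∑ j, if i < j then A i i * A j j - A i j * A j i else 0)
      = (∑ i, ∑ j, if i < j then f i * f j else 0) - P := by
    rw [hP, ← sum_sub_distrib]
    refine sum_congr rfl fun i _ => ?_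
    rw [← sum_sub_distrib]
    refine sum_congr rfl fun j _ => ?_
    split_ifs <;> ring
  -- products of pairs
  have hprod : (∑ i, ∑ j, if i < j then f i * f j else 0)
      = (((f 0 + S) ^ 2) - (f 0 ^ 2 + Q)) / 2 := by
    have h := split_sum (univ : Finset (Fin (n + 2))) (fun i j => f i * f j)
    have h2 : (∑ i, ∑ j : Fin (n + 2), f i * f j) = (f 0 + S) ^ 2 := by
      rw [← sum_mul_sum, hT]; ring
    have h3 : (∑ i, ∑ j : Fin (n + 2), if i < j then f j * f i else 0)
        = ∑ i, ∑ j : Fin (n + 2), if i < j then f i * f j else 0 := by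
      refine sum_congr rfl fun i _ => sum_congr rfl fun j _ => ?_
      split_ifs <;> ring
    have h4 : (∑ i : Fin (n + 2), f i * f i) = f 0 ^ 2 + Q := by
      rw [← hQfull]; refine sum_congr rfl fun i _ => by ring
    rw [h2, h3, h4] at h
    linarith
  -- D identity
  have hDval : D = ((n : ℝ) + 1) * Q - S ^ 2 := by
    have h := split_sum e (fun i j => (f i - f j) ^ 2)
    have h3 : (∑ i ∈ e, ∑ j ∈ e, if i < j then (f j - f i) ^ 2 else 0) = D := by
      rw [hD]
      refine sum_congr rfl fun i _ => sum_congr rfl fun j _ => ?_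
      split_ifs <;> ring
    have h4 : (∑ i ∈ e, (f i - f i) ^ 2) = 0 := by simp
    have h5 : (∑ i ∈ e, ∑ j ∈ e, (f i - f j) ^ 2)
        = 2 * (((n : ℝ) + 1) * Q - S ^ 2) := by
      have expand : ∀ i, (∑ j ∈ e, (f i - f j) ^ 2)
          = (e.card : ℝ) * f i ^ 2 - 2 * f i * S + Q := by
        intro i
        have : ∀ j, (f i - f j) ^ 2 = f i ^ 2 - 2 * f i * f j + f j ^ 2 := fun j => by ring
        simp only [this, sum_add_distrib, sum_sub_distrib, sum_const, nsmul_eq_mul,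
          ← mul_sum, ← hS, ← hQ]
      simp only [expand, sum_add_distrib, sum_sub_distrib, sum_const, nsmul_eq_mul,
        ← mul_sum, ← sum_mul, ← hS, ← hQ, hcard]
      ring
    rw [h3, h4, h5, ← hD] at h
    linarith
  have hne : ((n : ℝ) + 1) ≠ 0 := by positivity
  -- the key identity : LHS - RHS = D/(n+1) + P
  have hkey : (∑ i, A i i) * (∑ i, if i ≠ 0 then A i i else 0)
      - ((∑ i, ∑ j, if i < j then A i i * A j j - A i j * A j i else 0)
        + ((n + 2 : ℝ) / (2 * (n + 1))) * (∑ i, if i ≠ 0 then A i i else 0) ^ 2)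
      = D / (2 * ((n : ℝ) + 1)) + P := by
    have hAf : (∑ i, A i i) = f 0 + S := hT
    rw [hfilter, hsig, hprod, hAf, hDval]
    field_simp
    ring
  have hDnonneg : 0 ≤ D := by
    refine sum_nonneg fun i _ => sum_nonneg fun j _ => ?_
    split_ifs <;> positivity
  have hPnonneg : 0 ≤ P := by
    refine sum_nonneg fun i _ => sum_nonneg fun j _ => ?_
    split_ifs with h
    · exact hA i j h
    · exact le_rfl
  clear_value f e S Q P D
  simp only [hf]
  constructor
  · intro heq
    have h0 : D / (2 * ((n : ℝ) + 1)) + P = 0 := by rw [← hkey]; linarith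
    have hc : (0:ℝ) < 2 * ((n : ℝ) + 1) := by positivity
    have hdiv : 0 ≤ D / (2 * ((n : ℝ) + 1)) := div_nonneg hDnonneg hc.le
    have hP0 : P = 0 := by linarith
    have hD0 : D = 0 := by
      have h1 : D / (2 * ((n : ℝ) + 1)) = 0 := by linarith
      rcases div_eq_zero_iff.mp h1 with h2 | h2
      · exact h2
      · exact absurd h2 hc.ne'
    constructor
    · -- diag equal
      have hD0' : (∑ i ∈ e, ∑ j ∈ e, if i < j then (f i - f j) ^ 2 else 0) = 0 := by
        rw [← hD]; exact hD0
      have hterm : ∀ i ∈ e, ∀ j ∈ e, (if i < j then (f i - f j) ^ 2 else 0) = 0 := by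
        intro i hi j hj
        have inner0 := (sum_eq_zero_iff_of_nonneg (fun k _ => by
          refine sum_nonneg fun l _ => ?_
          split_ifs <;> positivity)).1 hD0' i hi
        exact (sum_eq_zero_iff_of_nonneg (fun l _ => by split_ifs <;> positivity)).1
          inner0 j hj
      have key : ∀ i ∈ e, ∀ j ∈ e, i < j → A i i = A j j := by
        intro i hi j hj hij
        have h1 := hterm i hi j hj
        rw [if_pos hij] at h1
        have h2 := pow_eq_zero_iff (n := 2) (by norm_num) |>.1 h1
        have h3 : f i = f j := by linarith [sub_eq_zero.1 h2]
        simpa [hf] using h3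
      intro i j hi hj
      have hie : i ∈ e := by rw [he]; simp [hi]
      have hje : j ∈ e := by rw [he]; simp [hj]
      rcases lt_trichotomy i j with h | h | h
      · exact key i hie j hje h
      · rw [h]
      · exact (key j hje i hie h).symm
    · -- products zero
      intro i j hij
      have hP0' : (∑ i, ∑ j, if i < j then A i j * A j i else 0) = 0 := by
        rw [← hP]; exact hP0
      have inner0 := (sum_eq_zero_iff_of_nonneg (fun k _ => by
        refine sum_nonneg fun l _ => ?_
        split_ifs with h
        · exact hA k l h
        · exact le_rfl)).1 hP0' i (mem_univ i)
      have := (sum_eq_zero_iff_of_nonneg (fun l _ => by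
        split_ifs with h
        · exact hA i l h
        · exact le_rfl)).1 inner0 j (mem_univ j)
      rwa [if_pos hij] at this
  · rintro ⟨hdiag, hprodz⟩
    have hD0 : D = 0 := by
      rw [hD]
      refine sum_eq_zero fun i hi => sum_eq_zero fun j hj => ?_
      rw [he, mem_erase] at hi hj
      split_ifs with h
      · have := hdiag i j hi.1 hj.1
        simp [hf, this]
      · rfl
    have hP0 : P = 0 := by
      rw [hP]
      refine sum_eq_zero fun i _ => sum_eq_zero fun j _ => ?_
      split_ifs with h
      · exact hprodz i j h
      · rfl
    rw [hD0, hP0] at hkey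
    rw [zero_div, add_zero] at hkey
    linarith
end

section
/- Define u : [a, 1) → ℝ for a fixed constant 0 < a < 1 by u(r) = (1/√2)·(−2√(1−r) − r/√(1−a) + 2√(1−a) + a/√(1−a)). Then for all a ≤ r < 1, u''(r) > u'(r)·(1 + u'(r)²). -/
/-! Up to the factor `c = 1/√2`, `u' = p - q` and `u'' = p³/2`, where `p = (1-r)^{-1/2}` and
`q = (1-a)^{-1/2}`. Since `c² = 1/2`, the claim becomes `2t + t³ < p³` for `t = p - q ≥ 0`,
and `p³ - t³ - 2t = 3qt² + (3q² - 2)t + q³ > 0` because `q ≥ 1`. -/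

open Real Filter

lemma hasDerivAt_neg_two_mul_sqrt_one_sub {x : ℝ} (hx : x < 1) :
    HasDerivAt (fun r => -2 * √(1 - r)) (√(1 - x))⁻¹ x := by
  have hx' : 0 < 1 - x := by linarith
  have hs : √(1 - x) ≠ 0 := (sqrt_pos.2 hx').ne'
  refine ((((hasDerivAt_id' x).const_sub 1).sqrt hx'.ne').const_mul (-2)).congr_deriv ?_
  field_simp

lemma hasDerivAt_inv_sqrt_one_sub {x : ℝ} (hx : x < 1) :
    HasDerivAt (fun r => (√(1 - r))⁻¹) ((√(1 - x))⁻¹ ^ 3 / 2) x := by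
  have hx' : 0 < 1 - x := by linarith
  have hs : √(1 - x) ≠ 0 := (sqrt_pos.2 hx').ne'
  refine ((((hasDerivAt_id' x).const_sub 1).sqrt hx'.ne').inv hs).congr_deriv ?_
  rw [sq_sqrt hx'.le]
  nth_rewrite 2 [← sq_sqrt hx'.le]
  field_simp

section Profile

variable (c b d : ℝ)

lemma hasDerivAt_profile {x : ℝ} (hx : x < 1) :
    HasDerivAt (fun r => c * (-2 * √(1 - r) - r / b + d)) (c * ((√(1 - x))⁻¹ - b⁻¹)) x := by
  refine ((((hasDerivAt_neg_two_mul_sqrt_one_sub hx).sub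
    ((hasDerivAt_id' x).div_const b)).add_const d).const_mul c).congr_deriv ?_
  rw [one_div]

lemma deriv_profile {x : ℝ} (hx : x < 1) :
    deriv (fun r => c * (-2 * √(1 - r) - r / b + d)) x = c * ((√(1 - x))⁻¹ - b⁻¹) :=
  (hasDerivAt_profile c b d hx).deriv

lemma deriv_deriv_profile {x : ℝ} (hx : x < 1) :
    deriv (deriv fun r => c * (-2 * √(1 - r) - r / b + d)) x = c * ((√(1 - x))⁻¹ ^ 3 / 2) := by
  have hnear : deriv (fun r => c * (-2 * √(1 - r) - r / b + d))
      =ᶠ[nhds x] fun r => c * ((√(1 - r))⁻¹ - b⁻¹) := by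
    filter_upwards [Iio_mem_nhds hx] with r hr using deriv_profile c b d hr
  rw [hnear.deriv_eq]
  exact (((hasDerivAt_inv_sqrt_one_sub hx).sub_const b⁻¹).const_mul c).deriv

end Profile

lemma two_mul_sub_add_sub_pow_three_lt {p q : ℝ} (hq : 1 ≤ q) (hqp : q ≤ p) :
    2 * (p - q) + (p - q) ^ 3 < p ^ 3 := by
  have ht : 0 ≤ p - q := by linarith
  nlinarith [mul_nonneg (mul_nonneg ht ht) (by linarith : (0 : ℝ) ≤ q),
    mul_nonneg ht (by nlinarith : (0 : ℝ) ≤ 3 * q ^ 2 - 2), pow_pos (by linarith : (0 : ℝ) < q) 3]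

lemma inv_sqrt_two_mul_lt {p q : ℝ} (hq : 1 ≤ q) (hqp : q ≤ p) :
    (1 / √2) * (p - q) * (1 + ((1 / √2) * (p - q)) ^ 2) < (1 / √2) * (p ^ 3 / 2) := by
  have hc2 : (1 / √2) ^ 2 = 1 / 2 := by rw [div_pow, one_pow, sq_sqrt zero_le_two]
  have hlhs : (1 / √2) * (p - q) * (1 + ((1 / √2) * (p - q)) ^ 2)
      = (1 / √2) * ((2 * (p - q) + (p - q) ^ 3) / 2) := by
    linear_combination (1 / √2) * (p - q) ^ 3 * hc2
  rw [hlhs]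
  gcongr
  exact two_mul_sub_add_sub_pow_three_lt hq hqp

/-- For 0 < a < 1 and u(r) = (1/√2)(−2√(1−r) − r/√(1−a) + 2√(1−a) + a/√(1−a)):
u''(r) > u'(r)(1 + u'(r)²) for all a ≤ r < 1. -/
theorem stmt_6 (a : ℝ) (ha : 0 < a) (ha1 : a < 1)
    (u : ℝ → ℝ)
    (hu : u = fun r => (1 / Real.sqrt 2) *
      (-2 * Real.sqrt (1 - r) - r / Real.sqrt (1 - a)
        + 2 * Real.sqrt (1 - a) + a / Real.sqrt (1 - a))) :
    ∀ r, a ≤ r → r < 1 →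
      deriv (deriv u) r > deriv u r * (1 + (deriv u r) ^ 2) := by
  intro r har hr1
  have hu' : u = fun r => (1 / √2) * (-2 * √(1 - r) - r / √(1 - a)
      + (2 * √(1 - a) + a / √(1 - a))) := by
    rw [hu]; funext r; ring
  have hq : 1 ≤ (√(1 - a))⁻¹ :=
    (one_le_inv₀ (sqrt_pos.2 (by linarith))).2 (sqrt_le_one.2 (by linarith))
  have hqp : (√(1 - a))⁻¹ ≤ (√(1 - r))⁻¹ :=
    inv_anti₀ (sqrt_pos.2 (by linarith)) (sqrt_le_sqrt (by linarith))
  rw [hu', deriv_deriv_profile _ _ _ hr1, deriv_profile _ _ _ hr1]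
  exact inv_sqrt_two_mul_lt hq hqp
end

section
/- Let 0 < a < 1 and let u : [a,1) → ℝ satisfy u(a) = 0, u'(a) = 0, u'(r) > 0 for a < r < 1, and u''(r) > u'(r)(1 + u'(r)²) for a ≤ r < 1. Then for all a ≤ r < 1, u(r) − r·u'(r) + ((1 + u(r)² + r²)/2)·u''(r)/(1 + u'(r)²) > 0. -/
/-- If u on [a,1) satisfies u(a)=0, u'(a)=0, u' > 0 on (a,1),
and u'' > u'(1+(u')²) on [a,1), then
u − r·u' + ((1+u²+r²)/2)·u''/(1+(u')²) > 0 on [a,1). -/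
theorem stmt_7 (a : ℝ) (ha : 0 < a) (ha1 : a < 1)
    (u u' u'' : ℝ → ℝ)
    (hd1 : ∀ r ∈ Set.Ico a 1, HasDerivWithinAt u (u' r) (Set.Ico a 1) r)
    (hd2 : ∀ r ∈ Set.Ico a 1, HasDerivWithinAt u' (u'' r) (Set.Ico a 1) r)
    (hua : u a = 0) (hu'a : u' a = 0)
    (hu'pos : ∀ r, a < r → r < 1 → 0 < u' r)
    (hu'' : ∀ r ∈ Set.Ico a 1, u'' r > u' r * (1 + (u' r) ^ 2)) :
    ∀ r ∈ Set.Ico a 1,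
      0 < u r - r * u' r + ((1 + (u r) ^ 2 + r ^ 2) / 2) * u'' r / (1 + (u' r) ^ 2) := by
  intro r hr
  obtain ⟨har, hr1⟩ := hr
  -- u is strictly monotone on [a,1)
  have hint : interior (Set.Ico a (1:ℝ)) = Set.Ioo a 1 := interior_Ico
  have hmono : StrictMonoOn u (Set.Ico a 1) := by
    apply strictMonoOn_of_hasDerivWithinAt_pos (convex_Ico a 1)
      (fun x hx => (hd1 x hx).continuousWithinAt)
      (f' := u')
    · intro x hx
      rw [hint] at hx ⊢
      exact (hd1 x ⟨hx.1.le, hx.2⟩).mono Set.Ioo_subset_Ico_self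
    · intro x hx
      rw [hint] at hx
      exact hu'pos x hx.1 hx.2
  have hu0 : 0 ≤ u r := by
    rcases eq_or_lt_of_le har with h | h
    · rw [← h, hua]
    · have := hmono ⟨le_refl a, ha1⟩ ⟨har, hr1⟩ h
      rw [hua] at this; linarith
  have hu'0 : 0 ≤ u' r := by
    rcases eq_or_lt_of_le har with h | h
    · rw [← h, hu'a]
    · exact (hu'pos r h hr1).le
  have hden : 0 < 1 + (u' r) ^ 2 := by positivity
  have hcoef : 0 < (1 + (u r) ^ 2 + r ^ 2) / 2 := by positivity
  have key : u'' r / (1 + (u' r) ^ 2) > u' r := by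
    rw [gt_iff_lt, lt_div_iff₀ hden]
    exact hu'' r ⟨har, hr1⟩
  have h2 : ((1 + (u r) ^ 2 + r ^ 2) / 2) * u'' r / (1 + (u' r) ^ 2)
      > ((1 + (u r) ^ 2 + r ^ 2) / 2) * u' r := by
    rw [mul_div_assoc]
    exact (mul_lt_mul_iff_right₀ hcoef).mpr key
  have h3 : 0 ≤ u r - r * u' r + ((1 + (u r) ^ 2 + r ^ 2) / 2) * u' r := by
    have : u r - r * u' r + ((1 + (u r) ^ 2 + r ^ 2) / 2) * u' r
        = u r + u' r * ((u r) ^ 2 + (r - 1) ^ 2) / 2 := by ring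
    rw [this]
    have : 0 ≤ u' r * ((u r) ^ 2 + (r - 1) ^ 2) := by positivity
    linarith
  linarith
end

section
/- Let f(z) = (√z + 1)·√(1 − z²) for 0 ≤ z ≤ 1. Then f is concave on [0,1], i.e., f''(z) ≤ 0 for all 0 < z < 1. -/
/-!
Since `√z · √(1 - z²) = √(z - z³)` for `z ≥ 0`, the function is `√(z - z³) + √(1 - z²)`.
Both radicands are concave and nonnegative on `[0, 1]`, and the square root of a nonnegative
concave function is concave, because `√` is concave and monotone. A function that is concave
and differentiable on an open interval has an antitone derivative there, so its second
derivative is nonpositive.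
-/

open Set Real

lemma ConcaveOn.sqrt {s : Set ℝ} {u : ℝ → ℝ} (hu : ConcaveOn ℝ s u)
    (hu_nonneg : ∀ x ∈ s, 0 ≤ u x) : ConcaveOn ℝ s fun x => √(u x) := by
  refine ⟨hu.1, fun x hx y hy a b ha hb hab => ?_⟩
  calc a • √(u x) + b • √(u y) ≤ √(a • u x + b • u y) :=
        strictConcaveOn_sqrt.concaveOn.2 (hu_nonneg x hx) (hu_nonneg y hy) ha hb hab
    _ ≤ √(u (a • x + b • y)) := Real.sqrt_le_sqrt (hu.2 hx hy ha hb hab)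

lemma ConcaveOn.deriv_deriv_nonpos {s : Set ℝ} {f : ℝ → ℝ} (hs : IsOpen s)
    (hf : ConcaveOn ℝ s f) (hf_diff : ∀ x ∈ s, DifferentiableAt ℝ f x) {x : ℝ} (hx : x ∈ s) :
    deriv (deriv f) x ≤ 0 := by
  rw [← derivWithin_of_isOpen hs hx]
  exact (hf.antitoneOn_deriv hf_diff).derivWithin_nonpos

lemma concaveOn_sub_pow_three : ConcaveOn ℝ (Ici 0) fun z : ℝ => z - z ^ 3 :=
  (concaveOn_id (convex_Ici 0)).sub (convexOn_pow 3)

lemma concaveOn_one_sub_sq : ConcaveOn ℝ univ fun z : ℝ => 1 - z ^ 2 :=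
  (concaveOn_const 1 convex_univ).sub (even_two.convexOn_pow)

lemma sqrt_add_one_mul_sqrt_one_sub_sq {z : ℝ} (hz : 0 ≤ z) :
    (√z + 1) * √(1 - z ^ 2) = √(z - z ^ 3) + √(1 - z ^ 2) := by
  rw [add_mul, one_mul, ← Real.sqrt_mul hz]
  ring_nf

lemma concaveOn_sqrt_add_one_mul_sqrt_one_sub_sq :
    ConcaveOn ℝ (Icc 0 1) fun z : ℝ => (√z + 1) * √(1 - z ^ 2) := by
  have h_sub_cube : ConcaveOn ℝ (Icc 0 1) fun z : ℝ => √(z - z ^ 3) :=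
    (concaveOn_sub_pow_three.subset Icc_subset_Ici_self (convex_Icc 0 1)).sqrt
      fun z ⟨h0, h1⟩ => by nlinarith [mul_nonneg (mul_nonneg h0 (sub_nonneg.2 h1)) h0]
  have h_one_sub_sq : ConcaveOn ℝ (Icc 0 1) fun z : ℝ => √(1 - z ^ 2) :=
    (concaveOn_one_sub_sq.subset (subset_univ _) (convex_Icc 0 1)).sqrt
      fun z ⟨h0, h1⟩ => by nlinarith
  exact (h_sub_cube.add h_one_sub_sq).congr
    fun z hz => (sqrt_add_one_mul_sqrt_one_sub_sq hz.1).symm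

/-- f(z) = (√z + 1)√(1 − z²) is concave on [0,1]; in particular f''(z) ≤ 0
for all 0 < z < 1. -/
theorem stmt_9 (f : ℝ → ℝ)
    (hf : f = fun z => (Real.sqrt z + 1) * Real.sqrt (1 - z ^ 2)) :
    ConcaveOn ℝ (Set.Icc (0 : ℝ) 1) f ∧
      ∀ z, 0 < z → z < 1 → deriv (deriv f) z ≤ 0 := by
  subst hf
  refine ⟨concaveOn_sqrt_add_one_mul_sqrt_one_sub_sq, fun z hz0 hz1 => ?_⟩
  have h_diff : ∀ x ∈ Ioo (0 : ℝ) 1,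
      DifferentiableAt ℝ (fun z : ℝ => (√z + 1) * √(1 - z ^ 2)) x := fun x ⟨hx0, hx1⟩ => by
    have hx_ne : x ≠ 0 := hx0.ne'
    have h_radicand_ne : 1 - x ^ 2 ≠ 0 := by nlinarith
    fun_prop (disch := assumption)
  exact (concaveOn_sqrt_add_one_mul_sqrt_one_sub_sq.subset Ioo_subset_Icc_self
    (convex_Ioo 0 1)).deriv_deriv_nonpos isOpen_Ioo h_diff ⟨hz0, hz1⟩
end

section
/- Let n ≥ 2 and let A be a real n × n matrix such that the minor (A|1) obtained by deleting the first row and column satisfies (A|1) = c·B + d·I_{n−1}, where B is a real symmetric (n−1)×(n−1) matrix, c, d ∈ ℝ, and I_{n−1} is the identity. Assume additionally that a_{1j}·a_{j1} ≥ 0 for all 2 ≤ j ≤ n. Then trace(A)·(c·trace(B) + (n−1)d) ≥ σ₂(A) + (n/(2(n−1)))·(c·trace(B) + (n−1)d)², where σ₂(A) = Σ_{i<j}(a_{ii}a_{jj} − a_{ij}a_{ji}). -/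
open Finset

/-- Combination of Proposition 2.4 with Lemma 3.2: if the minor (A|1) equals
c·B + d·I with B symmetric, and a_{1j}a_{j1} ≥ 0 for j ≥ 2, then
tr(A)·(c·tr(B)+(n−1)d) ≥ σ₂(A) + (n/(2(n−1)))·(c·tr(B)+(n−1)d)².
(Here A has size n+1 with n ≥ 1, so the paper's n is n+1 and n−1 is n.) -/
theorem stmt_12 (n : ℕ) (hn : 1 ≤ n)
    (A : Matrix (Fin (n + 1)) (Fin (n + 1)) ℝ)
    (B : Matrix (Fin n) (Fin n) ℝ) (hB : B.IsSymm) (c d : ℝ)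
    (hmin : A.submatrix Fin.succ Fin.succ = c • B + d • (1 : Matrix (Fin n) (Fin n) ℝ))
    (hsign : ∀ j : Fin (n + 1), j ≠ 0 → 0 ≤ A 0 j * A j 0) :
    A.trace * (c * B.trace + n * d) ≥
      (∑ i, ∑ j, if i < j then A i i * A j j - A i j * A j i else 0)
        + ((n + 1 : ℝ) / (2 * n)) * (c * B.trace + n * d) ^ 2 := by
  have hn0 : (0:ℝ) < n := by exact_mod_cast hn
  set T : ℝ := c * B.trace + n * d with hT
  -- trace of minor equals T
  have htr : ∑ i : Fin n, A i.succ i.succ = T := by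
    have h := congrArg Matrix.trace hmin
    rw [Matrix.trace_add, Matrix.trace_smul, Matrix.trace_smul, Matrix.trace_one] at h
    have h2 : (A.submatrix Fin.succ Fin.succ).trace = ∑ i : Fin n, A i.succ i.succ := by
      simp [Matrix.trace, Matrix.diag]
    rw [h2] at h
    rw [h, hT]
    simp [smul_eq_mul]
    ring
  -- symmetry of minor
  have hsymm : ∀ i j : Fin n, A i.succ j.succ = A j.succ i.succ := by
    intro i j
    have h1 := congrFun (congrFun hmin i) j
    have h2 := congrFun (congrFun hmin j) i
    simp only [Matrix.submatrix_apply, Matrix.add_apply, Matrix.smul_apply, Matrix.one_apply,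
      smul_eq_mul] at h1 h2
    rw [h1, h2, hB.apply i j]
    simp [eq_comm]
  -- sign of off-diagonal products
  have hprod : ∀ i j : Fin (n+1), i < j → 0 ≤ A i j * A j i := by
    intro i j hij
    rcases Fin.eq_zero_or_eq_succ i with rfl | ⟨i', rfl⟩
    · exact hsign j (by rintro rfl; exact absurd hij (lt_irrefl _))
    · rcases Fin.eq_zero_or_eq_succ j with rfl | ⟨j', rfl⟩
      · exact absurd hij (by simp [Fin.lt_def])
      · rw [hsymm i' j']
        exact mul_self_nonneg _
  -- σ₂ bound
  set σ₂ : ℝ := ∑ i, ∑ j, if i < j then A i i * A j j - A i j * A j i else 0 with hσ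
  set S₁ : ℝ := ∑ i : Fin (n+1), ∑ j, if i < j then A i i * A j j else 0 with hS₁
  have hσle : σ₂ ≤ S₁ := by
    apply Finset.sum_le_sum; intro i _
    apply Finset.sum_le_sum; intro j _
    by_cases h : i < j
    · simp only [if_pos h]
      have := hprod i j h
      linarith
    · simp [h]
  -- square of trace identity
  have key : (∑ i : Fin (n+1), A i i)^2 = 2 * S₁ + ∑ i : Fin (n+1), (A i i)^2 := by
    have e1 : (∑ i : Fin (n+1), A i i)^2
        = ∑ i : Fin (n+1), ∑ j : Fin (n+1), A i i * A j j := by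
      rw [sq, Finset.sum_mul_sum]
    have e2 : ∀ i j : Fin (n+1), A i i * A j j =
        (if i < j then A i i * A j j else 0) + (if j < i then A i i * A j j else 0)
          + (if i = j then A i i * A j j else 0) := by
      intro i j
      rcases lt_trichotomy i j with h | h | h
      · simp [h, h.ne, (lt_asymm h), h.ne']
      · simp [h]
      · simp [h, h.ne, (lt_asymm h), h.ne']
    have e3 : (∑ i : Fin (n+1), ∑ j, if j < i then A i i * A j j else 0) = S₁ := by
      rw [Finset.sum_comm]
      apply Finset.sum_congr rfl; intro i _
      apply Finset.sum_congr rfl; intro j _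
      rw [mul_comm]
    have e4 : (∑ i : Fin (n+1), ∑ j, if i = j then A i i * A j j else 0)
        = ∑ i : Fin (n+1), (A i i)^2 := by
      apply Finset.sum_congr rfl; intro i _
      simp [sq]
    calc (∑ i : Fin (n+1), A i i)^2
        = ∑ i : Fin (n+1), ∑ j : Fin (n+1), A i i * A j j := e1
      _ = ∑ i : Fin (n+1), ∑ j : Fin (n+1),
            ((if i < j then A i i * A j j else 0) + (if j < i then A i i * A j j else 0)
              + (if i = j then A i i * A j j else 0)) := by
            apply Finset.sum_congr rfl; intro i _
            apply Finset.sum_congr rfl; intro j _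
            exact e2 i j
      _ = 2 * S₁ + ∑ i : Fin (n+1), (A i i)^2 := by
            simp only [Finset.sum_add_distrib]
            rw [e3, e4]; ring
  -- Cauchy–Schwarz on the last n diagonal entries
  have hCS : T^2 ≤ (n:ℝ) * ∑ i : Fin n, (A i.succ i.succ)^2 := by
    rw [← htr]
    have := sq_sum_le_card_mul_sum_sq (s := (Finset.univ : Finset (Fin n)))
      (f := fun i => A i.succ i.succ)
    simpa using this
  have hHsplit : A.trace = A 0 0 + T := by
    rw [Matrix.trace]
    simp [Matrix.diag, Fin.sum_univ_succ, htr]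
  have hSsplit : ∑ i : Fin (n+1), (A i i)^2
      = (A 0 0)^2 + ∑ i : Fin n, (A i.succ i.succ)^2 := by
    rw [Fin.sum_univ_succ]
  have htrdef : A.trace = ∑ i : Fin (n+1), A i i := rfl
  have h2n : (0:ℝ) < 2 * n := by linarith
  clear_value T σ₂ S₁
  rw [ge_iff_le, ← sub_nonneg]
  have heq : A.trace * T - (σ₂ + ((n + 1 : ℝ) / (2 * n)) * T ^ 2)
      = (A.trace * T * (2*n) - σ₂ * (2*n) - (n+1) * T^2) / (2*n) := by
    field_simp; ring
  rw [heq]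
  apply div_nonneg _ (le_of_lt h2n)
  set a : ℝ := A 0 0 with ha
  set S' : ℝ := ∑ i : Fin n, (A i.succ i.succ)^2 with hS'
  clear_value a S'
  have key2 : 2 * S₁ = 2*a*T + T^2 - S' := by
    have := key
    rw [← htrdef, hHsplit, hSsplit] at this
    nlinarith [this]
  have key2n : (2*S₁) * (n:ℝ) = (2*a*T + T^2 - S') * n := by rw [key2]
  have e5 : σ₂ * (2*(n:ℝ)) ≤ (2*a*T + T^2 - S') * n := by
    have h := mul_le_mul_of_nonneg_right hσle (le_of_lt hn0)
    nlinarith [key2n]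
  have hmain : σ₂ * (2*(n:ℝ)) + ((n:ℝ)+1) * T^2 ≤ A.trace * T * (2*(n:ℝ)) := by
    rw [hHsplit]
    nlinarith [e5, hCS]
  linarith
end
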